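/- Let $\mathcal{T}_\delta \phi(s) := \frac{1}{2\pi}\int_a^b \frac{2\delta}{|s-s'|^2+(2\delta)^2}\phi(s')\,ds'$ for a Lipschitz function $\phi : [a,b] \to \mathbb{C}$. Then for every $s$ in a compact subinterval $[a+c, b-c]$ (with $c>0$), we have $\mathcal{T}_\delta \phi(s) = \frac{1}{2}\phi(s) + O(\delta \ln(1/\delta))$ as $\delta \to 0^+$, uniformly on $[a+c, b-c]$. -/

import Mathlib

open Real intervalIntegral

lemma my_arctan_le_self {x : ℝ} (hx : 0 ≤ x) : Real.arctan x ≤ x := by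
  have h0 : 0 ≤ Real.arctan x := by
    rw [← Real.arctan_zero]
    exact Real.arctan_strictMono.monotone hx
  calc Real.arctan x ≤ Real.tan (Real.arctan x) :=
        Real.le_tan h0 (Real.arctan_lt_pi_div_two x)
    _ = x := Real.tan_arctan x



lemma my_integral_kernel (d A B : ℝ) (hd : 0 < d) :
    ∫ u in A..B, d / (u ^ 2 + d ^ 2) = arctan (B / d) - arctan (A / d) := by
  have key : ∀ u ∈ Set.uIcc A B, HasDerivAt (fun v => arctan (v / d))
      (d / (u ^ 2 + d ^ 2)) u := by
    intro u _
    have h1 : HasDerivAt (fun v : ℝ => v / d) (1 / d) u := by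
      simpa using (hasDerivAt_id u).div_const d
    have h2 := (Real.hasDerivAt_arctan (u / d)).comp u h1
    refine h2.congr_deriv ?_
    have hd2 : (0:ℝ) < u ^ 2 + d ^ 2 := by positivity
    field_simp
    ring
  have hint : IntervalIntegrable (fun u => d / (u ^ 2 + d ^ 2)) MeasureTheory.volume A B := by
    apply Continuous.intervalIntegrable
    exact continuous_const.div (by continuity) (fun u => by positivity)
  exact integral_eq_sub_of_hasDerivAt key hint

lemma my_integral_log (d B : ℝ) (hd : 0 < d) (hB : 0 ≤ B) :
    ∫ u in (0:ℝ)..B, 1 / (u + d) = Real.log (B + d) - Real.log d := by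
  have key : ∀ u ∈ Set.uIcc (0:ℝ) B, HasDerivAt (fun v => Real.log (v + d))
      (1 / (u + d)) u := by
    intro u hu
    rw [Set.uIcc_of_le hB] at hu
    have hpos : 0 < u + d := by linarith [hu.1]
    have h1 : HasDerivAt (fun v : ℝ => v + d) 1 u := (hasDerivAt_id u).add_const d
    have h2 := (Real.hasDerivAt_log hpos.ne').comp u h1
    simpa [one_div, Function.comp_def] using h2
  have hint : IntervalIntegrable (fun u => 1 / (u + d)) MeasureTheory.volume 0 B := by
    apply ContinuousOn.intervalIntegrable
    apply ContinuousOn.div continuousOn_const (by fun_prop)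
    intro u hu
    rw [Set.uIcc_of_le hB] at hu
    have : 0 < u + d := by linarith [hu.1]
    exact this.ne'
  simpa using integral_eq_sub_of_hasDerivAt key hint

lemma my_integral_abs (d A B : ℝ) (hd : 0 < d) (hA : A ≤ 0) (hB : 0 ≤ B) :
    ∫ u in A..B, 1 / (|u| + d)
      = (Real.log (B + d) - Real.log d) + (Real.log (-A + d) - Real.log d) := by
  have hcont : Continuous (fun u : ℝ => 1 / (|u| + d)) := by
    apply continuous_const.div (by continuity)
    intro u
    have : 0 < |u| + d := by positivity
    exact this.ne'
  have hint : ∀ x y : ℝ, IntervalIntegrable (fun u => 1 / (|u| + d)) MeasureTheory.volume x y :=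
    fun x y => hcont.intervalIntegrable x y
  have hsplit := integral_add_adjacent_intervals (hint A 0) (hint 0 B)
  have hpos : ∫ u in (0:ℝ)..B, 1 / (|u| + d) = Real.log (B + d) - Real.log d := by
    rw [show (∫ u in (0:ℝ)..B, 1 / (|u| + d)) = ∫ u in (0:ℝ)..B, 1 / (u + d) from
      integral_congr (g := fun u => 1 / (u + d)) ?_]
    · exact my_integral_log d B hd hB
    · intro u hu
      rw [Set.uIcc_of_le hB] at hu
      simp only [one_div]; rw [abs_of_nonneg hu.1]
  have hneg : ∫ u in A..(0:ℝ), 1 / (|u| + d) = Real.log (-A + d) - Real.log d := by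
    have := integral_comp_neg (a := (0:ℝ)) (b := -A) (fun u => 1 / (|u| + d))
    simp only [abs_neg, neg_neg, neg_zero] at this
    rw [← this]
    rw [show (∫ u in (0:ℝ)..(-A), 1 / (|u| + d)) = ∫ u in (0:ℝ)..(-A), 1 / (u + d) from
      integral_congr (g := fun u => 1 / (u + d)) ?_]
    · exact my_integral_log d (-A) hd (by linarith)
    · intro u hu
      rw [Set.uIcc_of_le (by linarith : (0:ℝ) ≤ -A)] at hu
      simp only [one_div]; rw [abs_of_nonneg hu.1]
  linarith [hsplit]

set_option maxHeartbeats 1000000 in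
theorem poisson_operator_half_limit (a b c L : ℝ) (hc : 0 < c) (hcab : 2 * c < b - a)
    (hL : 0 ≤ L) (φ : ℝ → ℂ)
    (hφ : ∀ s ∈ Set.Icc a b, ∀ s' ∈ Set.Icc a b, ‖φ s - φ s'‖ ≤ L * |s - s'|) :
    ∃ C > 0, ∃ δ₀ > 0, ∀ δ : ℝ, 0 < δ → δ < δ₀ → ∀ s ∈ Set.Icc (a + c) (b - c),
      ‖(1 / (2 * (π:ℂ))) * (∫ s' in a..b,
          ((2 * δ / (|s - s'| ^ 2 + (2 * δ) ^ 2) : ℝ) : ℂ) * φ s')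
        - (1 / 2) * φ s‖ ≤ C * δ * Real.log (1 / δ) := by
  have hab : a < b := by linarith
  have hπ : (0:ℝ) < π := Real.pi_pos
  set M : ℝ := ‖φ a‖ + L * (b - a) with hM
  have hba : (0:ℝ) ≤ b - a := by linarith
  have hM0 : 0 ≤ M := by positivity
  set Λ : ℝ := Real.log (b - a + 1) with hΛdef
  have hΛ : 0 ≤ Λ := Real.log_nonneg (by linarith)
  set K₁ : ℝ := 2 * M / (π * c) with hK₁
  set K₂ : ℝ := 4 * L / π with hK₂
  have hK₁0 : 0 ≤ K₁ := by positivity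
  have hK₂0 : 0 ≤ K₂ := by positivity
  have hlog2 : (0:ℝ) < Real.log 2 := Real.log_pos (by norm_num)
  refine ⟨(K₁ + K₂ * Λ) / Real.log 2 + K₂ + 1, by positivity, 1/2, by norm_num,
    fun δ hδ hδ2 s hs => ?_⟩
  -- setup
  obtain ⟨hs1, hs2⟩ := hs
  have hsab : s ∈ Set.Icc a b := ⟨by linarith, by linarith⟩
  set d : ℝ := 2 * δ with hd
  have hd0 : 0 < d := by positivity
  set A : ℝ := a - s with hA
  set B : ℝ := b - s with hB
  have hAneg : A ≤ -c := by simp [hA]; linarith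
  have hBpos : c ≤ B := by simp [hB]; linarith
  have hA0 : A ≤ 0 := by linarith
  have hB0 : 0 ≤ B := by linarith
  -- continuity of φ on [a,b]
  have hφc : ContinuousOn φ (Set.Icc a b) := by
    have : LipschitzOnWith (Real.toNNReal L) φ (Set.Icc a b) := by
      apply LipschitzOnWith.of_dist_le_mul
      intro x hx y hy
      rw [dist_eq_norm, Real.dist_eq, Real.coe_toNNReal L hL]
      exact hφ x hx y hy
    exact this.continuousOn
  -- the kernel
  set k : ℝ → ℝ := fun s' => 2 * δ / (|s - s'| ^ 2 + (2 * δ) ^ 2) with hk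
  have hkc : Continuous k := by
    apply continuous_const.div (by continuity)
    intro u
    positivity
  have hknn : ∀ s', 0 ≤ k s' := fun s' => by positivity
  -- integrabilities
  have huIcc : Set.uIcc a b = Set.Icc a b := Set.uIcc_of_le hab.le
  have I2 : IntervalIntegrable (fun s' => ((k s' : ℝ) : ℂ) * (φ s' - φ s))
      MeasureTheory.volume a b := by
    apply ContinuousOn.intervalIntegrable
    rw [huIcc]
    exact ((Complex.continuous_ofReal.comp hkc).continuousOn).mul (hφc.sub continuousOn_const)
  have I3 : IntervalIntegrable (fun s' => ((k s' : ℝ) : ℂ) * φ s)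
      MeasureTheory.volume a b :=
    ((Complex.continuous_ofReal.comp hkc).mul continuous_const).intervalIntegrable a b
  -- split the integral
  have hsplit : (∫ s' in a..b, ((k s' : ℝ) : ℂ) * φ s')
      = (∫ s' in a..b, ((k s' : ℝ) : ℂ) * (φ s' - φ s))
        + ((∫ s' in a..b, k s' : ℝ) : ℂ) * φ s := by
    have : (∫ s' in a..b, ((k s' : ℝ) : ℂ) * φ s')
        = ∫ s' in a..b, (((k s' : ℝ) : ℂ) * (φ s' - φ s) + ((k s' : ℝ) : ℂ) * φ s) := by
      apply integral_congr
      intro x _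
      ring
    rw [this, integral_add I2 I3, integral_mul_const, intervalIntegral.integral_ofReal]
  -- compute ∫ k
  have hkval : (∫ s' in a..b, k s') = arctan (B / d) - arctan (A / d) := by
    have h1 : (∫ s' in a..b, k s') = ∫ s' in a..b, (fun u => d / (u ^ 2 + d ^ 2)) (s' - s) := by
      apply integral_congr
      intro x _
      simp only [hk, hd]
      rw [abs_sub_comm, sq_abs]
    rw [h1, integral_comp_sub_right (fun u => d / (u ^ 2 + d ^ 2)) s]
    exact my_integral_kernel d (a - s) (b - s) hd0
  -- rewrite the goal expression
  set X : ℝ := arctan (B / d) - arctan (A / d) with hX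
  set r : ℝ := X / (2 * π) - 1 / 2 with hr
  have hrw : (1 / (2 * (π:ℂ))) * (∫ s' in a..b, ((k s' : ℝ) : ℂ) * φ s') - (1 / 2) * φ s
      = (1 / (2 * (π:ℂ))) * (∫ s' in a..b, ((k s' : ℝ) : ℂ) * (φ s' - φ s))
        + ((r : ℝ) : ℂ) * φ s := by
    rw [hsplit, hkval]
    have hπc : (π:ℂ) ≠ 0 := by exact_mod_cast hπ.ne'
    push_cast [hr, hX]
    field_simp
    ring
  have hℓpos : 0 < Real.log (1 / δ) := Real.log_pos (by rw [lt_div_iff₀ hδ]; linarith)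
  have hlogδ : Real.log 2 ≤ Real.log (1 / δ) :=
    Real.log_le_log (by norm_num) (by rw [le_div_iff₀ hδ]; linarith)
  -- bound ‖φ s‖
  have hφs : ‖φ s‖ ≤ M := by
    have h1 := hφ s hsab a ⟨le_refl a, hab.le⟩
    have h2 : ‖φ s‖ ≤ ‖φ s - φ a‖ + ‖φ a‖ := by
      simpa using norm_add_le (φ s - φ a) (φ a)
    have h3 : |s - a| ≤ b - a := by
      rw [abs_of_nonneg (by linarith)]; linarith
    have h4 : L * |s - a| ≤ L * (b - a) := by
      exact mul_le_mul_of_nonneg_left h3 hL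
    rw [hM]; linarith
  -- bound |r|
  have hrle : |r| ≤ d / (π * c) := by
    have hB' : 0 < B / d := div_pos (lt_of_lt_of_le hc hBpos) hd0
    have hY' : 0 < (s - a) / d := div_pos (by linarith) hd0
    have hXY : X = arctan (B / d) + arctan ((s - a) / d) := by
      rw [hX, show A / d = -((s - a) / d) by rw [hA]; ring, Real.arctan_neg]
      ring
    have h1 : π / 2 - arctan (B / d) ≤ d / c := by
      rw [← Real.arctan_inv_of_pos hB', show (B / d)⁻¹ = d / B by
        rw [inv_div]]
      calc arctan (d / B) ≤ d / B := my_arctan_le_self (by positivity)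
        _ ≤ d / c := by gcongr <;> linarith
    have h2 : π / 2 - arctan ((s - a) / d) ≤ d / c := by
      rw [← Real.arctan_inv_of_pos hY', show ((s - a) / d)⁻¹ = d / (s - a) by
        rw [inv_div]]
      have hsa : 0 < s - a := by linarith
      calc arctan (d / (s - a)) ≤ d / (s - a) := my_arctan_le_self (by positivity)
        _ ≤ d / c := by gcongr <;> linarith
    have h3 : X ≤ π := by
      have := Real.arctan_lt_pi_div_two (B / d)
      have := Real.arctan_lt_pi_div_two ((s - a) / d)
      rw [hXY]; linarith
    have h4 : π - 2 * (d / c) ≤ X := by rw [hXY]; linarith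
    have hre : r = (X - π) / (2 * π) := by rw [hr]; field_simp
    have hdc := div_pos hd0 hc
    have habsX : |X - π| ≤ 2 * (d / c) := by
      clear_value X d A B
      rw [abs_le]; constructor <;> linarith
    rw [hre, abs_div, abs_of_pos (by positivity : (0:ℝ) < 2 * π)]
    calc |X - π| / (2 * π) ≤ (2 * (d / c)) / (2 * π) := by gcongr
      _ = d / (π * c) := by field_simp
  have hterm2 : ‖((r : ℝ) : ℂ) * φ s‖ ≤ K₁ * δ := by
    rw [norm_mul, Complex.norm_real, Real.norm_eq_abs]
    calc |r| * ‖φ s‖ ≤ (d / (π * c)) * M := by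
          apply mul_le_mul hrle hφs (norm_nonneg _) (le_of_lt (div_pos hd0 (by positivity)))
      _ = K₁ * δ := by rw [hK₁, hd]; field_simp
  -- bound the error integral
  have hIerr : ‖∫ s' in a..b, ((k s' : ℝ) : ℂ) * (φ s' - φ s)‖
      ≤ 4 * L * δ * (2 * (Λ + Real.log (1 / δ))) := by
    set g : ℝ → ℝ := fun s' => 4 * L * δ / (|s' - s| + d) with hg
    have hgc : Continuous g := by
      rw [hg]
      apply continuous_const.div
      · exact (continuous_id.sub continuous_const).abs.add continuous_const
      · intro u
        have h := abs_nonneg (u - s)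
        exact ne_of_gt (by linarith)
    have step1 : ‖∫ s' in a..b, ((k s' : ℝ) : ℂ) * (φ s' - φ s)‖ ≤ ∫ s' in a..b, g s' := by
      refine (norm_integral_le_integral_norm hab.le).trans ?_
      apply integral_mono_on hab.le I2.norm (hgc.intervalIntegrable a b)
      intro x hx
      have hlip : ‖φ x - φ s‖ ≤ L * |x - s| := hφ x hx s hsab
      have hkx : k x = 2 * δ / ((x - s) ^ 2 + (2 * δ) ^ 2) := by
        rw [hk]; simp only []
        rw [abs_sub_comm, sq_abs]
      have hnn : (0:ℝ) ≤ 2 * δ / ((x - s) ^ 2 + (2 * δ) ^ 2) := by positivity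
      calc ‖((k x : ℝ) : ℂ) * (φ x - φ s)‖ = k x * ‖φ x - φ s‖ := by
            rw [norm_mul, Complex.norm_real, Real.norm_eq_abs, abs_of_nonneg (hknn x)]
        _ ≤ k x * (L * |x - s|) :=
            mul_le_mul_of_nonneg_left hlip (hknn x)
        _ ≤ g x := by
            rw [hkx, hg]; simp only []
            rw [hd, div_mul_eq_mul_div, div_le_div_iff₀ (by positivity) (by positivity)]
            nlinarith [mul_nonneg (mul_nonneg hL hδ.le) (sq_nonneg (|x - s| - δ)),
              sq_abs (x - s), mul_nonneg (mul_nonneg hL hδ.le) (sq_nonneg δ),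
              abs_nonneg (x - s), mul_nonneg hL hδ.le]
    have step2 : (∫ s' in a..b, g s')
        = 4 * L * δ * ((Real.log (B + d) - Real.log d) + (Real.log (-A + d) - Real.log d)) := by
      have e1 : (∫ s' in a..b, g s')
          = ∫ s' in a..b, (fun u => 4 * L * δ * (1 / (|u| + d))) (s' - s) := by
        apply integral_congr
        intro x _
        rw [hg]; simp only []
        ring
      rw [e1, integral_comp_sub_right (fun u => 4 * L * δ * (1 / (|u| + d))) s,
        integral_const_mul, my_integral_abs d (a - s) (b - s) hd0 (by linarith) (by linarith)]
    have step3 : (Real.log (B + d) - Real.log d) + (Real.log (-A + d) - Real.log d)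
        ≤ 2 * (Λ + Real.log (1 / δ)) := by
      have l1 : Real.log (B + d) ≤ Λ := by
        apply Real.log_le_log (by linarith)
        rw [hB, hd]; linarith
      have l2 : Real.log (-A + d) ≤ Λ := by
        apply Real.log_le_log (by linarith)
        rw [hA, hd]; linarith
      have l3 : -Real.log d ≤ Real.log (1 / δ) := by
        rw [one_div, Real.log_inv]
        have : Real.log δ ≤ Real.log d := Real.log_le_log hδ (by rw [hd]; linarith)
        linarith
      linarith
    calc ‖∫ s' in a..b, ((k s' : ℝ) : ℂ) * (φ s' - φ s)‖ ≤ ∫ s' in a..b, g s' := step1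
      _ = 4 * L * δ * ((Real.log (B + d) - Real.log d) + (Real.log (-A + d) - Real.log d)) :=
          step2
      _ ≤ 4 * L * δ * (2 * (Λ + Real.log (1 / δ))) := by
          apply mul_le_mul_of_nonneg_left step3 (by positivity)
  -- assemble
  have hnormc : ‖(1 / (2 * (π:ℂ)))‖ = 1 / (2 * π) := by
    rw [show (1 / (2 * (π:ℂ))) = ((1 / (2 * π) : ℝ) : ℂ) by push_cast; ring,
      Complex.norm_real, Real.norm_eq_abs, abs_of_pos (by positivity)]
  have hEeq : (∫ s' in a..b, ((2 * δ / (|s - s'| ^ 2 + (2 * δ) ^ 2) : ℝ) : ℂ) * φ s')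
      = ∫ s' in a..b, ((k s' : ℝ) : ℂ) * φ s' := rfl
  rw [hEeq, hrw]
  set ℓ : ℝ := Real.log (1 / δ) with hℓ
  set Q : ℝ := (K₁ + K₂ * Λ) / Real.log 2 with hQ
  have hQ0 : 0 ≤ Q := by positivity
  have hQeq : K₁ + K₂ * Λ = Q * Real.log 2 := by
    rw [hQ]; field_simp
  calc ‖(1 / (2 * (π:ℂ))) * (∫ s' in a..b, ((k s' : ℝ) : ℂ) * (φ s' - φ s))
        + ((r : ℝ) : ℂ) * φ s‖
      ≤ ‖(1 / (2 * (π:ℂ))) * (∫ s' in a..b, ((k s' : ℝ) : ℂ) * (φ s' - φ s))‖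
        + ‖((r : ℝ) : ℂ) * φ s‖ := norm_add_le _ _
    _ ≤ (1 / (2 * π)) * (4 * L * δ * (2 * (Λ + ℓ))) + K₁ * δ := by
        apply add_le_add _ hterm2
        rw [norm_mul, hnormc]
        exact mul_le_mul_of_nonneg_left hIerr (by positivity)
    _ = K₂ * δ * Λ + K₂ * (δ * ℓ) + K₁ * δ := by
        rw [hK₂]; field_simp
    _ ≤ (Q + K₂ + 1) * δ * ℓ := by
        have key : Q * δ * Real.log 2 ≤ Q * δ * ℓ :=
          mul_le_mul_of_nonneg_left hlogδ (by positivity)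
        nlinarith [mul_pos hδ hℓpos, mul_nonneg (mul_nonneg hK₂0 hδ.le) hℓpos.le]
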